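/- arXiv:1306.5254 — 4 statements merged into one kernel-verified Lean document; each statement's English description precedes it below -/
import Mathlib

section
/- Let (Ψ,Φ) be a solution of the Jacobi equations on ℝ⁴ with div Φ = 0 (divergence in the x-variables). Then the Hamiltonian vector fields X_{H₁} and X_{H₂} with Hamiltonians H₁ = −y and H₂ = Φ·Ψ commute, i.e. their Lie bracket vanishes. -/
noncomputable section

abbrev V3 : Type := Fin 3 → ℝ
abbrev SF : Type := V3 → ℝ → ℝ
abbrev VF : Type := V3 → ℝ → V3

def dot (a b : V3) : ℝ := a 0 * b 0 + a 1 * b 1 + a 2 * b 2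

def cross (a b : V3) : V3 :=
  ![a 1 * b 2 - a 2 * b 1, a 2 * b 0 - a 0 * b 2, a 0 * b 1 - a 1 * b 0]

def pdx (i : Fin 3) (f : SF) (x : V3) (y : ℝ) : ℝ :=
  fderiv ℝ (fun x' => f x' y) x (Pi.single i 1)

def pdy (f : SF) (x : V3) (y : ℝ) : ℝ := deriv (fun y' => f x y') y

def grad (f : SF) (x : V3) (y : ℝ) : V3 := fun i => pdx i f x y

def vpdy (V : VF) (x : V3) (y : ℝ) : V3 := fun i => pdy (fun x y => V x y i) x y

def divx (V : VF) (x : V3) (y : ℝ) : ℝ := ∑ i : Fin 3, pdx i (fun x y => V x y i) x y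

def rot (V : VF) (x : V3) (y : ℝ) : V3 :=
  ![pdx 1 (fun x y => V x y 2) x y - pdx 2 (fun x y => V x y 1) x y,
    pdx 2 (fun x y => V x y 0) x y - pdx 0 (fun x y => V x y 2) x y,
    pdx 0 (fun x y => V x y 1) x y - pdx 1 (fun x y => V x y 0) x y]

def SmoothF (f : SF) : Prop := ContDiff ℝ (⊤ : ℕ∞) fun p : V3 × ℝ => f p.1 p.2
def SmoothV (V : VF) : Prop := ContDiff ℝ (⊤ : ℕ∞) fun p : V3 × ℝ => V p.1 p.2

def pbrak (Ψ Φ : VF) (f g : SF) : SF := fun x y =>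
  dot (Ψ x y) (cross (grad f x y) (grad g x y)) +
    dot (Φ x y) (pdy f x y • grad g x y - pdy g x y • grad f x y)

def JacobiEqs (Ψ Φ : VF) : Prop :=
  (∀ x y, dot (Ψ x y) (rot Ψ x y + vpdy Φ x y) = pdy (fun x y => dot (Ψ x y) (Φ x y)) x y) ∧
  (∀ x y, cross (Φ x y) (rot Ψ x y + vpdy Φ x y) + divx Φ x y • Ψ x y
      = grad (fun x y => dot (Ψ x y) (Φ x y)) x y)

def XHx (Ψ Φ : VF) (H : SF) : VF := fun x y =>
  cross (Ψ x y) (grad H x y) - pdy H x y • Φ x y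

def XHy (Φ : VF) (H : SF) : SF := fun x y => dot (grad H x y) (Φ x y)

def Casimir (Ψ Φ : VF) (k : SF) : Prop :=
  ∀ x y, cross (Ψ x y) (grad k x y) - pdy k x y • Φ x y = 0 ∧ dot (grad k x y) (Φ x y) = 0

def LD (W : VF) (b : SF) (f : SF) : SF := fun x y =>
  dot (W x y) (grad f x y) + b x y * pdy f x y

def H1 : SF := fun _ y => -y
def H2 (Ψ Φ : VF) : SF := fun x y => dot (Φ x y) (Ψ x y)

def Fn (f : SF) : V3 × ℝ → ℝ := fun p => f p.1 p.2

namespace SmoothF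

theorem diff (hf : SmoothF f) : Differentiable ℝ (Fn f) := hf.differentiable (by simp)

theorem diffx (hf : SmoothF f) (y : ℝ) : Differentiable ℝ (fun x' => f x' y) := by
  have : ContDiff ℝ (⊤ : ℕ∞) (fun x' => f x' y) :=
    hf.comp (contDiff_id.prodMk contDiff_const)
  exact this.differentiable (by simp)

theorem diffy (hf : SmoothF f) (x : V3) : Differentiable ℝ (fun y' => f x y') := by
  have : ContDiff ℝ (⊤ : ℕ∞) (fun y' => f x y') :=
    hf.comp (contDiff_const.prodMk contDiff_id)
  exact this.differentiable (by simp)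

theorem add' (hf : SmoothF f) (hg : SmoothF g) : SmoothF (fun x y => f x y + g x y) :=
  ContDiff.add hf hg
theorem sub' (hf : SmoothF f) (hg : SmoothF g) : SmoothF (fun x y => f x y - g x y) :=
  ContDiff.sub hf hg
theorem mul' (hf : SmoothF f) (hg : SmoothF g) : SmoothF (fun x y => f x y * g x y) :=
  ContDiff.mul hf hg

end SmoothF

theorem pdx_eq (hf : SmoothF f) (i : Fin 3) (x : V3) (y : ℝ) :
    pdx i f x y = fderiv ℝ (Fn f) (x, y) (Pi.single i 1, 0) := by
  have h1 : HasFDerivAt (fun x' : V3 => (x', y)) (ContinuousLinearMap.inl ℝ V3 ℝ) x :=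
    hasFDerivAt_prodMk_left x y
  have h2 : HasFDerivAt (Fn f) (fderiv ℝ (Fn f) (x, y)) (x, y) :=
    (hf.diff (x, y)).hasFDerivAt
  have h3 : HasFDerivAt (fun x' => f x' y)
      ((fderiv ℝ (Fn f) (x, y)).comp (ContinuousLinearMap.inl ℝ V3 ℝ)) x := by have := h2.comp x h1; exact this
  rw [pdx, h3.fderiv]; rfl

theorem pdy_eq (hf : SmoothF f) (x : V3) (y : ℝ) :
    pdy f x y = fderiv ℝ (Fn f) (x, y) (0, 1) := by
  have h1 : HasFDerivAt (fun y' : ℝ => (x, y')) (ContinuousLinearMap.inr ℝ V3 ℝ) y :=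
    hasFDerivAt_prodMk_right x y
  have h2 : HasFDerivAt (Fn f) (fderiv ℝ (Fn f) (x, y)) (x, y) :=
    (hf.diff (x, y)).hasFDerivAt
  have h3 : HasFDerivAt (fun y' => f x y')
      ((fderiv ℝ (Fn f) (x, y)).comp (ContinuousLinearMap.inr ℝ V3 ℝ)) y := h2.comp y h1
  rw [pdy, h3.hasDerivAt.deriv]; rfl

theorem smooth_D (hf : SmoothF f) (v : V3 × ℝ) :
    SmoothF (fun x y => fderiv ℝ (Fn f) (x, y) v) := by
  have h1 : ContDiff ℝ (⊤ : ℕ∞) (fderiv ℝ (Fn f)) := hf.fderiv_right (by simp)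
  exact h1.clm_apply contDiff_const

theorem smooth_pdx (hf : SmoothF f) (i : Fin 3) : SmoothF (fun x y => pdx i f x y) := by
  have := smooth_D hf (Pi.single i 1, 0)
  convert this using 1
  funext x y
  exact pdx_eq hf i x y

theorem smooth_pdy (hf : SmoothF f) : SmoothF (fun x y => pdy f x y) := by
  have := smooth_D hf (0, 1)
  convert this using 1
  funext x y
  exact pdy_eq hf x y

theorem D_of_D (hf : SmoothF f) (v w : V3 × ℝ) (x : V3) (y : ℝ) :
    fderiv ℝ (fun p : V3 × ℝ => fderiv ℝ (Fn f) p v) (x, y) w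
      = fderiv ℝ (fderiv ℝ (Fn f)) (x, y) w v := by
  have hc : DifferentiableAt ℝ (fderiv ℝ (Fn f)) (x, y) :=
    ((hf.fderiv_right (m := 1) (WithTop.coe_le_coe.mpr le_top)).differentiable one_ne_zero) (x, y)
  rw [fderiv_clm_apply hc (differentiableAt_const v)]
  simp

theorem D2_symm (hf : SmoothF f) (v w : V3 × ℝ) (x : V3) (y : ℝ) :
    fderiv ℝ (fderiv ℝ (Fn f)) (x, y) v w = fderiv ℝ (fderiv ℝ (Fn f)) (x, y) w v := by
  apply second_derivative_symmetric (f := Fn f) (f' := fderiv ℝ (Fn f))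
  · exact fun p => (hf.diff p).hasFDerivAt
  · exact (((hf.fderiv_right (m := 1) (WithTop.coe_le_coe.mpr le_top)).differentiable one_ne_zero) (x, y)).hasFDerivAt

theorem pdx_pdx_comm (hf : SmoothF f) (i j : Fin 3) (x : V3) (y : ℝ) :
    pdx i (fun x y => pdx j f x y) x y = pdx j (fun x y => pdx i f x y) x y := by
  have hj : (fun x y => pdx j f x y) = fun x y => fderiv ℝ (Fn f) (x, y) (Pi.single j 1, 0) := by
    funext x y; exact pdx_eq hf j x y
  have hi : (fun x y => pdx i f x y) = fun x y => fderiv ℝ (Fn f) (x, y) (Pi.single i 1, 0) := by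
    funext x y; exact pdx_eq hf i x y
  rw [hj, hi, pdx_eq (smooth_D hf _) i x y, pdx_eq (smooth_D hf _) j x y]
  show fderiv ℝ (fun p : V3 × ℝ => fderiv ℝ (Fn f) p (Pi.single j 1, 0)) (x, y) (Pi.single i 1, 0)
    = fderiv ℝ (fun p : V3 × ℝ => fderiv ℝ (Fn f) p (Pi.single i 1, 0)) (x, y) (Pi.single j 1, 0)
  rw [D_of_D hf, D_of_D hf, D2_symm hf]

theorem pdx_pdy_comm (hf : SmoothF f) (i : Fin 3) (x : V3) (y : ℝ) :
    pdx i (fun x y => pdy f x y) x y = pdy (fun x y => pdx i f x y) x y := by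
  have hj : (fun x y => pdy f x y) = fun x y => fderiv ℝ (Fn f) (x, y) (0, 1) := by
    funext x y; exact pdy_eq hf x y
  have hi : (fun x y => pdx i f x y) = fun x y => fderiv ℝ (Fn f) (x, y) (Pi.single i 1, 0) := by
    funext x y; exact pdx_eq hf i x y
  rw [hj, hi, pdx_eq (smooth_D hf _) i x y, pdy_eq (smooth_D hf _) x y]
  show fderiv ℝ (fun p : V3 × ℝ => fderiv ℝ (Fn f) p (0, 1)) (x, y) (Pi.single i 1, 0)
    = fderiv ℝ (fun p : V3 × ℝ => fderiv ℝ (Fn f) p (Pi.single i 1, 0)) (x, y) (0, 1)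
  rw [D_of_D hf, D_of_D hf, D2_symm hf]

theorem pdx_add (hf : SmoothF f) (hg : SmoothF g) (i : Fin 3) (x : V3) (y : ℝ) :
    pdx i (fun x y => f x y + g x y) x y = pdx i f x y + pdx i g x y := by
  unfold pdx
  rw [fderiv_fun_add ((hf.diffx y) x) ((hg.diffx y) x)]; rfl

theorem pdx_sub (hf : SmoothF f) (hg : SmoothF g) (i : Fin 3) (x : V3) (y : ℝ) :
    pdx i (fun x y => f x y - g x y) x y = pdx i f x y - pdx i g x y := by
  unfold pdx
  rw [fderiv_fun_sub ((hf.diffx y) x) ((hg.diffx y) x)]; rfl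

theorem pdx_neg (f : SF) (i : Fin 3) (x : V3) (y : ℝ) :
    pdx i (fun x y => -f x y) x y = -pdx i f x y := by
  unfold pdx
  rw [fderiv_fun_neg]; rfl

theorem pdx_mul (hf : SmoothF f) (hg : SmoothF g) (i : Fin 3) (x : V3) (y : ℝ) :
    pdx i (fun x y => f x y * g x y) x y = f x y * pdx i g x y + g x y * pdx i f x y := by
  unfold pdx
  rw [fderiv_fun_mul ((hf.diffx y) x) ((hg.diffx y) x)]; simp [mul_comm]

theorem pdx_const (c : ℝ) (i : Fin 3) (x : V3) (y : ℝ) :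
    pdx i (fun _ _ => c) x y = 0 := by
  unfold pdx
  rw [fderiv_fun_const]; rfl

theorem pdy_add (hf : SmoothF f) (hg : SmoothF g) (x : V3) (y : ℝ) :
    pdy (fun x y => f x y + g x y) x y = pdy f x y + pdy g x y := by
  unfold pdy
  exact deriv_fun_add ((hf.diffy x) y) ((hg.diffy x) y)

theorem pdy_const (c : ℝ) (x : V3) (y : ℝ) : pdy (fun _ _ => c) x y = 0 := by
  unfold pdy; exact deriv_const y c

def RC (Ψ Φ : VF) (i : Fin 3) : SF := fun x y => (rot Ψ x y + vpdy Φ x y) i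

theorem pdx_mul_sub {a b c d : SF} (ha : SmoothF a) (hb : SmoothF b) (hc : SmoothF c)
    (hd : SmoothF d) (k : Fin 3) (x : V3) (y : ℝ) :
    pdx k (fun x y => a x y * b x y - c x y * d x y) x y
      = a x y * pdx k b x y + b x y * pdx k a x y
        - (c x y * pdx k d x y + d x y * pdx k c x y) := by
  rw [pdx_sub (ha.mul' hb) (hc.mul' hd), pdx_mul ha hb, pdx_mul hc hd]

theorem pdx_neg_mul {a b : SF} (ha : SmoothF a) (hb : SmoothF b) (k : Fin 3) (x : V3) (y : ℝ) :
    pdx k (fun x y => -(a x y * b x y)) x y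
      = -(a x y * pdx k b x y + b x y * pdx k a x y) := by
  rw [pdx_neg (fun x y => a x y * b x y), pdx_mul ha hb]
theorem stmt4 (Ψ Φ : VF) (hΨ : SmoothV Ψ) (hΦ : SmoothV Φ)
    (hJ : JacobiEqs Ψ Φ) (hdiv : ∀ x y, divx Φ x y = 0) :
    ∀ x y,
      (∀ i : Fin 3,
        LD (XHx Ψ Φ H1) (XHy Φ H1) (fun x y => XHx Ψ Φ (H2 Ψ Φ) x y i) x y
          - LD (XHx Ψ Φ (H2 Ψ Φ)) (XHy Φ (H2 Ψ Φ)) (fun x y => XHx Ψ Φ H1 x y i) x y = 0) ∧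
      LD (XHx Ψ Φ H1) (XHy Φ H1) (XHy Φ (H2 Ψ Φ)) x y
        - LD (XHx Ψ Φ (H2 Ψ Φ)) (XHy Φ (H2 Ψ Φ)) (XHy Φ H1) x y = 0 := by
  obtain ⟨hJ1, hJ2⟩ := hJ
  have hSΨ : ∀ i, SmoothF (fun x y => Ψ x y i) := fun i => contDiff_pi.mp hΨ i
  have hSΦ : ∀ i, SmoothF (fun x y => Φ x y i) := fun i => contDiff_pi.mp hΦ i
  set cD : SF := fun x y => dot (Ψ x y) (Φ x y) with hcD
  have hscD : SmoothF cD := by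
    have : SmoothF (fun x y => Ψ x y 0 * Φ x y 0 + Ψ x y 1 * Φ x y 1 + Ψ x y 2 * Φ x y 2) :=
      (((hSΨ 0).mul' (hSΦ 0)).add' ((hSΨ 1).mul' (hSΦ 1))).add' ((hSΨ 2).mul' (hSΦ 2))
    exact this
  have hRC0 : RC Ψ Φ 0 = fun x y => pdx 1 (fun x y => Ψ x y 2) x y
      - pdx 2 (fun x y => Ψ x y 1) x y + pdy (fun x y => Φ x y 0) x y := by
    funext x y; simp [RC, rot, vpdy]
  have hRC1 : RC Ψ Φ 1 = fun x y => pdx 2 (fun x y => Ψ x y 0) x y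
      - pdx 0 (fun x y => Ψ x y 2) x y + pdy (fun x y => Φ x y 1) x y := by
    funext x y; simp [RC, rot, vpdy]
  have hRC2 : RC Ψ Φ 2 = fun x y => pdx 0 (fun x y => Ψ x y 1) x y
      - pdx 1 (fun x y => Ψ x y 0) x y + pdy (fun x y => Φ x y 2) x y := by
    funext x y; simp [RC, rot, vpdy]
  have hsR : ∀ i, SmoothF (RC Ψ Φ i) := by
    intro i; fin_cases i
    · show SmoothF (RC Ψ Φ 0)
      rw [hRC0]
      exact ((smooth_pdx (hSΨ 2) 1).sub' (smooth_pdx (hSΨ 1) 2)).add' (smooth_pdy (hSΦ 0))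
    · show SmoothF (RC Ψ Φ 1)
      rw [hRC1]
      exact ((smooth_pdx (hSΨ 0) 2).sub' (smooth_pdx (hSΨ 2) 0)).add' (smooth_pdy (hSΦ 1))
    · show SmoothF (RC Ψ Φ 2)
      rw [hRC2]
      exact ((smooth_pdx (hSΨ 1) 0).sub' (smooth_pdx (hSΨ 0) 1)).add' (smooth_pdy (hSΦ 2))
  -- Jacobi eq 2 componentwise, using div Φ = 0
  have gc0 : ∀ x y, pdx 0 cD x y = Φ x y 1 * RC Ψ Φ 2 x y - Φ x y 2 * RC Ψ Φ 1 x y := by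
    intro x y
    have h0 := congrFun (hJ2 x y) 0
    simp [cross, grad, RC, hdiv x y, hcD] at h0 ⊢
    linarith [h0]
  have gc1 : ∀ x y, pdx 1 cD x y = Φ x y 2 * RC Ψ Φ 0 x y - Φ x y 0 * RC Ψ Φ 2 x y := by
    intro x y
    have h0 := congrFun (hJ2 x y) 1
    simp [cross, grad, RC, hdiv x y, hcD] at h0 ⊢
    linarith [h0]
  have gc2 : ∀ x y, pdx 2 cD x y = Φ x y 0 * RC Ψ Φ 1 x y - Φ x y 1 * RC Ψ Φ 0 x y := by
    intro x y
    have h0 := congrFun (hJ2 x y) 2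
    simp [cross, grad, RC, hdiv x y, hcD] at h0 ⊢
    linarith [h0]
  have hyc : ∀ x y, pdy cD x y
      = Ψ x y 0 * RC Ψ Φ 0 x y + Ψ x y 1 * RC Ψ Φ 1 x y + Ψ x y 2 * RC Ψ Φ 2 x y := by
    intro x y
    have h0 := hJ1 x y
    simp [dot, RC, hcD] at h0 ⊢
    linarith [h0]
  have hH2 : H2 Ψ Φ = cD := by
    funext x y; simp [H2, hcD, dot]; ring
  have hW : ∀ x y i, XHx Ψ Φ (H2 Ψ Φ) x y i = -(cD x y * RC Ψ Φ i x y) := by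
    intro x y i
    rw [hH2]
    fin_cases i <;>
      simp [XHx, cross, grad, Pi.sub_apply, Pi.smul_apply, smul_eq_mul,
        gc0 x y, gc1 x y, gc2 x y, hyc x y] <;>
      · rw [hcD]; simp [dot]; ring
  have hH1x : ∀ (j : Fin 3) x y, pdx j H1 x y = 0 := by
    intro j x y
    simp [pdx, H1]
  have hH1y : ∀ x y, pdy H1 x y = -1 := by
    intro x y
    simp [pdy, H1]
  have hX1 : ∀ x y (i : Fin 3), XHx Ψ Φ H1 x y i = Φ x y i := by
    intro x y i
    fin_cases i <;>
      simp [XHx, cross, grad, Pi.sub_apply, Pi.smul_apply, smul_eq_mul, hH1x, hH1y x y]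
  have hb1 : ∀ x y, XHy Φ H1 x y = 0 := by
    intro x y; simp [XHy, dot, grad, hH1x]
  have hb2 : ∀ x y, XHy Φ (H2 Ψ Φ) x y = 0 := by
    intro x y
    rw [hH2]
    simp [XHy, dot, grad, gc0 x y, gc1 x y, gc2 x y]
    ring
  have hdiv' : ∀ x y, pdx 0 (fun x y => Φ x y 0) x y + pdx 1 (fun x y => Φ x y 1) x y
      + pdx 2 (fun x y => Φ x y 2) x y = 0 := by
    intro x y
    have := hdiv x y
    simpa [divx, Fin.sum_univ_three] using this
  have hdivR : ∀ x y, pdx 0 (RC Ψ Φ 0) x y + pdx 1 (RC Ψ Φ 1) x y + pdx 2 (RC Ψ Φ 2) x y = 0 := by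
    intro x y
    rw [hRC0, hRC1, hRC2]
    rw [pdx_add ((smooth_pdx (hSΨ 2) 1).sub' (smooth_pdx (hSΨ 1) 2)) (smooth_pdy (hSΦ 0)),
        pdx_add ((smooth_pdx (hSΨ 0) 2).sub' (smooth_pdx (hSΨ 2) 0)) (smooth_pdy (hSΦ 1)),
        pdx_add ((smooth_pdx (hSΨ 1) 0).sub' (smooth_pdx (hSΨ 0) 1)) (smooth_pdy (hSΦ 2)),
        pdx_sub (smooth_pdx (hSΨ 2) 1) (smooth_pdx (hSΨ 1) 2),
        pdx_sub (smooth_pdx (hSΨ 0) 2) (smooth_pdx (hSΨ 2) 0),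
        pdx_sub (smooth_pdx (hSΨ 1) 0) (smooth_pdx (hSΨ 0) 1)]
    rw [pdx_pdx_comm (hSΨ 2) 0 1, pdx_pdx_comm (hSΨ 1) 0 2, pdx_pdx_comm (hSΨ 0) 1 2]
    rw [pdx_pdy_comm (hSΦ 0) 0, pdx_pdy_comm (hSΦ 1) 1, pdx_pdy_comm (hSΦ 2) 2]
    have hzero : (fun x y => pdx 0 (fun x y => Φ x y 0) x y + pdx 1 (fun x y => Φ x y 1) x y
        + pdx 2 (fun x y => Φ x y 2) x y) = fun _ _ => (0 : ℝ) := by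
      funext x y; exact hdiv' x y
    have s1 : pdy (fun x y => pdx 0 (fun x y => Φ x y 0) x y + pdx 1 (fun x y => Φ x y 1) x y
        + pdx 2 (fun x y => Φ x y 2) x y) x y = 0 := by
      rw [hzero]; exact pdy_const 0 x y
    rw [pdy_add ((smooth_pdx (hSΦ 0) 0).add' (smooth_pdx (hSΦ 1) 1)) (smooth_pdx (hSΦ 2) 2),
        pdy_add (smooth_pdx (hSΦ 0) 0) (smooth_pdx (hSΦ 1) 1)] at s1
    linarith [s1]
  intro x y
  constructor
  · have hWf : ∀ i : Fin 3, (fun x y => XHx Ψ Φ (H2 Ψ Φ) x y i)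
        = fun x y => -(cD x y * RC Ψ Φ i x y) := by
      intro i; funext x y; exact hW x y i
    have hX1f : ∀ i : Fin 3, (fun x y => XHx Ψ Φ H1 x y i) = fun x y => Φ x y i := by
      intro i; funext x y; exact hX1 x y i
    have hg0f : (fun x y => Φ x y 1 * RC Ψ Φ 2 x y - Φ x y 2 * RC Ψ Φ 1 x y)
        = fun x y => pdx 0 cD x y := by funext x y; exact (gc0 x y).symm
    have hg1f : (fun x y => Φ x y 2 * RC Ψ Φ 0 x y - Φ x y 0 * RC Ψ Φ 2 x y)
        = fun x y => pdx 1 cD x y := by funext x y; exact (gc1 x y).symm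
    have hg2f : (fun x y => Φ x y 0 * RC Ψ Φ 1 x y - Φ x y 1 * RC Ψ Φ 0 x y)
        = fun x y => pdx 2 cD x y := by funext x y; exact (gc2 x y).symm
    have curl0 : pdx 1 (fun x y => Φ x y 0 * RC Ψ Φ 1 x y - Φ x y 1 * RC Ψ Φ 0 x y) x y
        = pdx 2 (fun x y => Φ x y 2 * RC Ψ Φ 0 x y - Φ x y 0 * RC Ψ Φ 2 x y) x y := by
      rw [hg2f, hg1f]
      exact pdx_pdx_comm hscD 1 2 x y
    rw [pdx_mul_sub (hSΦ 0) (hsR 1) (hSΦ 1) (hsR 0) 1 x y,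
        pdx_mul_sub (hSΦ 2) (hsR 0) (hSΦ 0) (hsR 2) 2 x y] at curl0
    have key0 : Φ x y 0 * pdx 0 (RC Ψ Φ 0) x y + Φ x y 1 * pdx 1 (RC Ψ Φ 0) x y
        + Φ x y 2 * pdx 2 (RC Ψ Φ 0) x y
        = RC Ψ Φ 0 x y * pdx 0 (fun x y => Φ x y 0) x y
          + RC Ψ Φ 1 x y * pdx 1 (fun x y => Φ x y 0) x y
          + RC Ψ Φ 2 x y * pdx 2 (fun x y => Φ x y 0) x y := by
      linear_combination (- curl0) + Φ x y 0 * hdivR x y - RC Ψ Φ 0 x y * hdiv' x y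
    have comp0 : LD (XHx Ψ Φ H1) (XHy Φ H1) (fun x y => XHx Ψ Φ (H2 Ψ Φ) x y 0) x y
        - LD (XHx Ψ Φ (H2 Ψ Φ)) (XHy Φ (H2 Ψ Φ)) (fun x y => XHx Ψ Φ H1 x y 0) x y = 0 := by
      rw [hWf 0, hX1f 0]
      simp only [LD, dot, grad]
      rw [hb1 x y, hb2 x y, hX1 x y 0, hX1 x y 1, hX1 x y 2, hW x y 0, hW x y 1, hW x y 2]
      simp only [pdx_neg_mul hscD (hsR 0)]
      rw [gc0 x y, gc1 x y, gc2 x y]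
      linear_combination (-(cD x y)) * key0
    have curl1 : pdx 2 (fun x y => Φ x y 1 * RC Ψ Φ 2 x y - Φ x y 2 * RC Ψ Φ 1 x y) x y
        = pdx 0 (fun x y => Φ x y 0 * RC Ψ Φ 1 x y - Φ x y 1 * RC Ψ Φ 0 x y) x y := by
      rw [hg0f, hg2f]
      exact pdx_pdx_comm hscD 2 0 x y
    rw [pdx_mul_sub (hSΦ 1) (hsR 2) (hSΦ 2) (hsR 1) 2 x y,
        pdx_mul_sub (hSΦ 0) (hsR 1) (hSΦ 1) (hsR 0) 0 x y] at curl1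
    have key1 : Φ x y 0 * pdx 0 (RC Ψ Φ 1) x y + Φ x y 1 * pdx 1 (RC Ψ Φ 1) x y
        + Φ x y 2 * pdx 2 (RC Ψ Φ 1) x y
        = RC Ψ Φ 0 x y * pdx 0 (fun x y => Φ x y 1) x y
          + RC Ψ Φ 1 x y * pdx 1 (fun x y => Φ x y 1) x y
          + RC Ψ Φ 2 x y * pdx 2 (fun x y => Φ x y 1) x y := by
      linear_combination (- curl1) + Φ x y 1 * hdivR x y - RC Ψ Φ 1 x y * hdiv' x y
    have comp1 : LD (XHx Ψ Φ H1) (XHy Φ H1) (fun x y => XHx Ψ Φ (H2 Ψ Φ) x y 1) x y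
        - LD (XHx Ψ Φ (H2 Ψ Φ)) (XHy Φ (H2 Ψ Φ)) (fun x y => XHx Ψ Φ H1 x y 1) x y = 0 := by
      rw [hWf 1, hX1f 1]
      simp only [LD, dot, grad]
      rw [hb1 x y, hb2 x y, hX1 x y 0, hX1 x y 1, hX1 x y 2, hW x y 0, hW x y 1, hW x y 2]
      simp only [pdx_neg_mul hscD (hsR 1)]
      rw [gc0 x y, gc1 x y, gc2 x y]
      linear_combination (-(cD x y)) * key1
    have curl2 : pdx 0 (fun x y => Φ x y 2 * RC Ψ Φ 0 x y - Φ x y 0 * RC Ψ Φ 2 x y) x y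
        = pdx 1 (fun x y => Φ x y 1 * RC Ψ Φ 2 x y - Φ x y 2 * RC Ψ Φ 1 x y) x y := by
      rw [hg1f, hg0f]
      exact pdx_pdx_comm hscD 0 1 x y
    rw [pdx_mul_sub (hSΦ 2) (hsR 0) (hSΦ 0) (hsR 2) 0 x y,
        pdx_mul_sub (hSΦ 1) (hsR 2) (hSΦ 2) (hsR 1) 1 x y] at curl2
    have key2 : Φ x y 0 * pdx 0 (RC Ψ Φ 2) x y + Φ x y 1 * pdx 1 (RC Ψ Φ 2) x y
        + Φ x y 2 * pdx 2 (RC Ψ Φ 2) x y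
        = RC Ψ Φ 0 x y * pdx 0 (fun x y => Φ x y 2) x y
          + RC Ψ Φ 1 x y * pdx 1 (fun x y => Φ x y 2) x y
          + RC Ψ Φ 2 x y * pdx 2 (fun x y => Φ x y 2) x y := by
      linear_combination (- curl2) + Φ x y 2 * hdivR x y - RC Ψ Φ 2 x y * hdiv' x y
    have comp2 : LD (XHx Ψ Φ H1) (XHy Φ H1) (fun x y => XHx Ψ Φ (H2 Ψ Φ) x y 2) x y
        - LD (XHx Ψ Φ (H2 Ψ Φ)) (XHy Φ (H2 Ψ Φ)) (fun x y => XHx Ψ Φ H1 x y 2) x y = 0 := by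
      rw [hWf 2, hX1f 2]
      simp only [LD, dot, grad]
      rw [hb1 x y, hb2 x y, hX1 x y 0, hX1 x y 1, hX1 x y 2, hW x y 0, hW x y 1, hW x y 2]
      simp only [pdx_neg_mul hscD (hsR 2)]
      rw [gc0 x y, gc1 x y, gc2 x y]
      linear_combination (-(cD x y)) * key2
    intro i; fin_cases i
    exacts [comp0, comp1, comp2]
  · -- second component
    have hz1 : XHy Φ H1 = fun _ _ => (0 : ℝ) := by funext x y; exact hb1 x y
    have hz2 : XHy Φ (H2 Ψ Φ) = fun _ _ => (0 : ℝ) := by funext x y; exact hb2 x y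
    rw [LD, LD, hz1, hz2]
    simp [dot, grad, pdx_const, pdy_const]
end
end

section
/- Let k₁, k₂, f be smooth functions on ℝ⁴ and define Ψ = f((∂k₂/∂y)∇k₁ − (∂k₁/∂y)∇k₂) and Φ = f(∇k₁ × ∇k₂). Then (Ψ,Φ) satisfies the Jacobi equations Ψ·(rot Ψ + ∂Φ/∂y) = ∂(Ψ·Φ)/∂y and Φ × (rot Ψ + ∂Φ/∂y) + (div Φ)Ψ = ∇(Ψ·Φ), and both k₁ and k₂ are Casimir functions of (Ψ,Φ). -/
noncomputable section

def PsiK (k1 k2 f : SF) : VF := fun x y =>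
  f x y • (pdy k2 x y • grad k1 x y - pdy k1 x y • grad k2 x y)
def PhiK (k1 k2 f : SF) : VF := fun x y => f x y • cross (grad k1 x y) (grad k2 x y)

namespace Aux14

lemma slicex {F : SF} (hF : SmoothF F) (x : V3) (y : ℝ) :
    HasFDerivAt (fun x' => F x' y)
      ((fderiv ℝ (fun p : V3 × ℝ => F p.1 p.2) (x, y)).comp (ContinuousLinearMap.inl ℝ V3 ℝ)) x :=
  by have h := ((hF.differentiable (by simp) (x, y)).hasFDerivAt).comp x (hasFDerivAt_prodMk_left (𝕜 := ℝ) x y); exact h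

lemma slicey {F : SF} (hF : SmoothF F) (x : V3) (y : ℝ) :
    HasDerivAt (fun y' => F x y')
      (fderiv ℝ (fun p : V3 × ℝ => F p.1 p.2) (x, y) (0, 1)) y := by
  have h := (((hF.differentiable (by simp) (x, y)).hasFDerivAt).comp y
    (hasFDerivAt_prodMk_right x y)).hasDerivAt
  simpa [Function.comp_def] using h

lemma dx {F : SF} (hF : SmoothF F) (x : V3) (y : ℝ) :
    DifferentiableAt ℝ (fun x' => F x' y) x := (slicex hF x y).differentiableAt

lemma dy {F : SF} (hF : SmoothF F) (x : V3) (y : ℝ) :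
    DifferentiableAt ℝ (fun y' => F x y') y := (slicey hF x y).differentiableAt

lemma pdx_eq {F : SF} (hF : SmoothF F) (i : Fin 3) (x : V3) (y : ℝ) :
    pdx i F x y = fderiv ℝ (fun p : V3 × ℝ => F p.1 p.2) (x, y) (Pi.single i 1, 0) := by
  rw [pdx, (slicex hF x y).fderiv]
  simp

lemma pdy_eq {F : SF} (hF : SmoothF F) (x : V3) (y : ℝ) :
    pdy F x y = fderiv ℝ (fun p : V3 × ℝ => F p.1 p.2) (x, y) (0, 1) :=
  (slicey hF x y).deriv

lemma smooth_pdx {F : SF} (hF : SmoothF F) (i : Fin 3) : SmoothF (pdx i F) := by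
  have h : (fun p : V3 × ℝ => pdx i F p.1 p.2)
      = fun p : V3 × ℝ => fderiv ℝ (fun q : V3 × ℝ => F q.1 q.2) p (Pi.single i 1, 0) := by
    funext p
    exact pdx_eq hF i p.1 p.2
  rw [SmoothF, h]
  exact (hF.fderiv_right (by simp)).clm_apply contDiff_const

lemma smooth_pdy {F : SF} (hF : SmoothF F) : SmoothF (pdy F) := by
  have h : (fun p : V3 × ℝ => pdy F p.1 p.2)
      = fun p : V3 × ℝ => fderiv ℝ (fun q : V3 × ℝ => F q.1 q.2) p (0, 1) := by
    funext p
    exact pdy_eq hF p.1 p.2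
  rw [SmoothF, h]
  exact (hF.fderiv_right (by simp)).clm_apply contDiff_const

lemma smooth_mul {F G : SF} (hF : SmoothF F) (hG : SmoothF G) :
    SmoothF fun x y => F x y * G x y := ContDiff.mul hF hG

lemma smooth_sub {F G : SF} (hF : SmoothF F) (hG : SmoothF G) :
    SmoothF fun x y => F x y - G x y := ContDiff.sub hF hG

lemma pdx_mul {F G : SF} (hF : SmoothF F) (hG : SmoothF G) (i : Fin 3) (x : V3) (y : ℝ) :
    pdx i (fun x y => F x y * G x y) x y = pdx i F x y * G x y + F x y * pdx i G x y := by
  unfold pdx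
  beta_reduce
  rw [fderiv_fun_mul (dx hF x y) (dx hG x y)]
  simp only [ContinuousLinearMap.add_apply, ContinuousLinearMap.coe_smul', Pi.smul_apply,
    smul_eq_mul]
  ring

lemma pdx_sub {F G : SF} (hF : SmoothF F) (hG : SmoothF G) (i : Fin 3) (x : V3) (y : ℝ) :
    pdx i (fun x y => F x y - G x y) x y = pdx i F x y - pdx i G x y := by
  unfold pdx
  beta_reduce
  rw [fderiv_fun_sub (dx hF x y) (dx hG x y)]
  simp

lemma pdy_mul {F G : SF} (hF : SmoothF F) (hG : SmoothF G) (x : V3) (y : ℝ) :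
    pdy (fun x y => F x y * G x y) x y = pdy F x y * G x y + F x y * pdy G x y := by
  unfold pdy
  beta_reduce
  rw [deriv_fun_mul (dy hF x y) (dy hG x y)]

lemma pdy_sub {F G : SF} (hF : SmoothF F) (hG : SmoothF G) (x : V3) (y : ℝ) :
    pdy (fun x y => F x y - G x y) x y = pdy F x y - pdy G x y := by
  unfold pdy
  beta_reduce
  rw [deriv_fun_sub (dy hF x y) (dy hG x y)]

lemma fderiv_swap {F : SF} (hF : SmoothF F) (v w : V3 × ℝ) (x : V3) (y : ℝ) :
    fderiv ℝ (fun p : V3 × ℝ => fderiv ℝ (fun q : V3 × ℝ => F q.1 q.2) p w) (x, y) v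
      = fderiv ℝ (fun p : V3 × ℝ => fderiv ℝ (fun q : V3 × ℝ => F q.1 q.2) p v) (x, y) w := by
  have hd : DifferentiableAt ℝ (fderiv ℝ (fun q : V3 × ℝ => F q.1 q.2)) (x, y) :=
    ((hF.fderiv_right (m := (⊤ : ℕ∞)) (by simp)).differentiable (by simp)) (x, y)
  rw [fderiv_clm_apply hd (differentiableAt_const _), fderiv_clm_apply hd (differentiableAt_const _)]
  simp only [fderiv_const, fderiv_fun_const, Pi.zero_apply, ContinuousLinearMap.comp_zero, zero_add,
    ContinuousLinearMap.add_apply, ContinuousLinearMap.flip_apply]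
  exact (hF.contDiffAt.isSymmSndFDerivAt (by rw [minSmoothness_of_isRCLikeNormedField]; exact WithTop.coe_le_coe.mpr le_top)) v w

lemma pdx_pdx_comm {F : SF} (hF : SmoothF F) (i j : Fin 3) (x : V3) (y : ℝ) :
    pdx i (pdx j F) x y = pdx j (pdx i F) x y := by
  have e : ∀ k : Fin 3, (fun p : V3 × ℝ => pdx k F p.1 p.2)
      = fun p : V3 × ℝ => fderiv ℝ (fun q : V3 × ℝ => F q.1 q.2) p (Pi.single k 1, 0) :=
    fun k => funext fun p => pdx_eq hF k p.1 p.2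
  rw [pdx_eq (smooth_pdx hF j) i x y, pdx_eq (smooth_pdx hF i) j x y, e i, e j,
    fderiv_swap hF _ _ x y]

lemma pdx_pdy_comm {F : SF} (hF : SmoothF F) (i : Fin 3) (x : V3) (y : ℝ) :
    pdx i (pdy F) x y = pdy (pdx i F) x y := by
  have e1 : (fun p : V3 × ℝ => pdy F p.1 p.2)
      = fun p : V3 × ℝ => fderiv ℝ (fun q : V3 × ℝ => F q.1 q.2) p (0, 1) :=
    funext fun p => pdy_eq hF p.1 p.2
  have e2 : (fun p : V3 × ℝ => pdx i F p.1 p.2)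
      = fun p : V3 × ℝ => fderiv ℝ (fun q : V3 × ℝ => F q.1 q.2) p (Pi.single i 1, 0) :=
    funext fun p => pdx_eq hF i p.1 p.2
  rw [pdx_eq (smooth_pdy hF) i x y, pdy_eq (smooth_pdx hF i) x y, e1, e2,
    fderiv_swap hF _ _ x y]

lemma pdx_big {a b c d e : SF} (ha : SmoothF a) (hb : SmoothF b) (hc : SmoothF c)
    (hd : SmoothF d) (he : SmoothF e) (i : Fin 3) (x : V3) (y : ℝ) :
    pdx i (fun x y => a x y * (b x y * c x y - d x y * e x y)) x y =
      pdx i a x y * (b x y * c x y - d x y * e x y) +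
      a x y * (pdx i b x y * c x y + b x y * pdx i c x y
        - (pdx i d x y * e x y + d x y * pdx i e x y)) := by
  rw [pdx_mul ha (smooth_sub (smooth_mul hb hc) (smooth_mul hd he)),
    pdx_sub (smooth_mul hb hc) (smooth_mul hd he), pdx_mul hb hc, pdx_mul hd he]

lemma pdy_big {a b c d e : SF} (ha : SmoothF a) (hb : SmoothF b) (hc : SmoothF c)
    (hd : SmoothF d) (he : SmoothF e) (x : V3) (y : ℝ) :
    pdy (fun x y => a x y * (b x y * c x y - d x y * e x y)) x y =
      pdy a x y * (b x y * c x y - d x y * e x y) +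
      a x y * (pdy b x y * c x y + b x y * pdy c x y
        - (pdy d x y * e x y + d x y * pdy e x y)) := by
  rw [pdy_mul ha (smooth_sub (smooth_mul hb hc) (smooth_mul hd he)),
    pdy_sub (smooth_mul hb hc) (smooth_mul hd he), pdy_mul hb hc, pdy_mul hd he]

end Aux14


set_option maxHeartbeats 2000000 in
theorem stmt14 (k1 k2 f : SF) (h1 : SmoothF k1) (h2 : SmoothF k2) (hf : SmoothF f) :
    JacobiEqs (PsiK k1 k2 f) (PhiK k1 k2 f) ∧
    Casimir (PsiK k1 k2 f) (PhiK k1 k2 f) k1 ∧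
    Casimir (PsiK k1 k2 f) (PhiK k1 k2 f) k2 := by
  have hzero : (fun x y => dot (PsiK k1 k2 f x y) (PhiK k1 k2 f x y)) = fun _ _ => (0:ℝ) := by
    funext x y
    simp only [PsiK, PhiK, dot, cross, grad, Pi.smul_apply, Pi.sub_apply, smul_eq_mul,
      Matrix.cons_val_zero, Matrix.cons_val_one, Matrix.head_cons, Matrix.cons_val_two,
      Matrix.tail_cons]
    ring
  refine ⟨⟨?_, ?_⟩, ?_, ?_⟩
  · -- first Jacobi equation
    intro x y
    have e0 : pdy (fun x y => dot (PsiK k1 k2 f x y) (PhiK k1 k2 f x y)) x y = 0 := by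
      rw [hzero]; simp [pdy]
    rw [e0]
    have Hrot := fun (i j : Fin 3) =>
      Aux14.pdx_big hf (Aux14.smooth_pdy h2) (Aux14.smooth_pdx h1 j)
        (Aux14.smooth_pdy h1) (Aux14.smooth_pdx h2 j) i x y
    have HphiY := fun (a b : Fin 3) =>
      Aux14.pdy_big hf (Aux14.smooth_pdx h1 a) (Aux14.smooth_pdx h2 b)
        (Aux14.smooth_pdx h1 b) (Aux14.smooth_pdx h2 a) x y
    have Hc1 := fun (i : Fin 3) => Aux14.pdx_pdy_comm h1 i x y
    have Hc2 := fun (i : Fin 3) => Aux14.pdx_pdy_comm h2 i x y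
    have Hs1a := Aux14.pdx_pdx_comm h1 1 0 x y
    have Hs1b := Aux14.pdx_pdx_comm h1 2 0 x y
    have Hs1c := Aux14.pdx_pdx_comm h1 2 1 x y
    have Hs2a := Aux14.pdx_pdx_comm h2 1 0 x y
    have Hs2b := Aux14.pdx_pdx_comm h2 2 0 x y
    have Hs2c := Aux14.pdx_pdx_comm h2 2 1 x y
    simp only [dot, rot, vpdy, PsiK, PhiK, cross, grad, Pi.add_apply, Pi.smul_apply,
      Pi.sub_apply, smul_eq_mul, Matrix.cons_val_zero, Matrix.cons_val_one, Matrix.head_cons,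
      Matrix.cons_val_two, Matrix.tail_cons]
    simp only [Hrot, HphiY, Hc1, Hc2, Hs1a, Hs1b, Hs1c, Hs2a, Hs2b, Hs2c]
    ring
  · -- second Jacobi equation
    intro x y
    rw [hzero]
    have hg : grad (fun _ _ => (0:ℝ)) x y = (0 : V3) := by
      funext i; simp [grad, pdx]
    rw [hg]
    have Hrot := fun (i j : Fin 3) =>
      Aux14.pdx_big hf (Aux14.smooth_pdy h2) (Aux14.smooth_pdx h1 j)
        (Aux14.smooth_pdy h1) (Aux14.smooth_pdx h2 j) i x y
    have HphiX := fun (i a b : Fin 3) =>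
      Aux14.pdx_big hf (Aux14.smooth_pdx h1 a) (Aux14.smooth_pdx h2 b)
        (Aux14.smooth_pdx h1 b) (Aux14.smooth_pdx h2 a) i x y
    have HphiY := fun (a b : Fin 3) =>
      Aux14.pdy_big hf (Aux14.smooth_pdx h1 a) (Aux14.smooth_pdx h2 b)
        (Aux14.smooth_pdx h1 b) (Aux14.smooth_pdx h2 a) x y
    have Hc1 := fun (i : Fin 3) => Aux14.pdx_pdy_comm h1 i x y
    have Hc2 := fun (i : Fin 3) => Aux14.pdx_pdy_comm h2 i x y
    have Hs1a := Aux14.pdx_pdx_comm h1 1 0 x y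
    have Hs1b := Aux14.pdx_pdx_comm h1 2 0 x y
    have Hs1c := Aux14.pdx_pdx_comm h1 2 1 x y
    have Hs2a := Aux14.pdx_pdx_comm h2 1 0 x y
    have Hs2b := Aux14.pdx_pdx_comm h2 2 0 x y
    have Hs2c := Aux14.pdx_pdx_comm h2 2 1 x y
    funext i
    fin_cases i <;>
    · simp only [dot, rot, vpdy, divx, PsiK, PhiK, cross, grad, Fin.sum_univ_three,
        Pi.add_apply, Pi.smul_apply, Pi.sub_apply, Pi.zero_apply, smul_eq_mul,
        Matrix.cons_val_zero, Matrix.cons_val_one, Matrix.head_cons,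
        Matrix.cons_val_two, Matrix.tail_cons, Fin.isValue, Fin.zero_eta, Fin.mk_one, Fin.reduceFinMk]
      simp only [Hrot, HphiX, HphiY, Hc1, Hc2, Hs1a, Hs1b, Hs1c, Hs2a, Hs2b, Hs2c]
      ring
  · -- Casimir k1
    intro x y
    constructor
    · funext i
      fin_cases i <;>
      · simp only [PsiK, PhiK, cross, grad, Pi.smul_apply, Pi.sub_apply, Pi.zero_apply,
          smul_eq_mul, Matrix.cons_val_zero, Matrix.cons_val_one, Matrix.head_cons,
          Matrix.cons_val_two, Matrix.tail_cons, Fin.isValue, Fin.zero_eta, Fin.mk_one, Fin.reduceFinMk]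
        ring
    · simp only [PsiK, PhiK, dot, cross, grad, Pi.smul_apply, Pi.sub_apply, smul_eq_mul,
        Matrix.cons_val_zero, Matrix.cons_val_one, Matrix.head_cons, Matrix.cons_val_two,
        Matrix.tail_cons]
      ring
  · -- Casimir k2
    intro x y
    constructor
    · funext i
      fin_cases i <;>
      · simp only [PsiK, PhiK, cross, grad, Pi.smul_apply, Pi.sub_apply, Pi.zero_apply,
          smul_eq_mul, Matrix.cons_val_zero, Matrix.cons_val_one, Matrix.head_cons,
          Matrix.cons_val_two, Matrix.tail_cons, Fin.isValue, Fin.zero_eta, Fin.mk_one, Fin.reduceFinMk]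
        ring
    · simp only [PsiK, PhiK, dot, cross, grad, Pi.smul_apply, Pi.sub_apply, smul_eq_mul,
        Matrix.cons_val_zero, Matrix.cons_val_one, Matrix.head_cons, Matrix.cons_val_two,
        Matrix.tail_cons]
      ring
end
end

section
/- Let Σ, Φ : ℝ⁴ → ℝ³ be smooth and consider the rank-≤2 tensor Λ = (Φ × Σ) ∂/∂x ∧ ∂/∂x + Φ ∂/∂x ∧ ∂/∂y, i.e. Ψ = Φ × Σ. Then (Ψ,Φ) satisfies the Jacobi equations if and only if Φ × (rot(Φ × Σ) + (div Φ)Σ + ∂Φ/∂y) = 0 at every point. -/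
noncomputable section

theorem stmt18 (Sig Φ : VF) (hSig : SmoothV Sig) (hΦ : SmoothV Φ) :
    JacobiEqs (fun x y => cross (Φ x y) (Sig x y)) Φ ↔
      ∀ x y,
        cross (Φ x y)
          (rot (fun x y => cross (Φ x y) (Sig x y)) x y
            + divx Φ x y • Sig x y + vpdy Φ x y) = 0 := by
  set Ψ : VF := fun x y => cross (Φ x y) (Sig x y) with hΨ
  have hz : (fun x y => dot (Ψ x y) (Φ x y)) = fun (_ : V3) (_ : ℝ) => (0:ℝ) := by
    funext x y; simp [hΨ, dot, cross]; ring
  have hgrad : ∀ x y, grad (fun (_ : V3) (_ : ℝ) => (0:ℝ)) x y = 0 := by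
    intro x y; funext i; simp [grad, pdx]
  have hpdy : ∀ x y, pdy (fun (_ : V3) (_ : ℝ) => (0:ℝ)) x y = 0 := by
    intro x y; simp [pdy]
  have key : ∀ x y,
      cross (Φ x y) (rot Ψ x y + divx Φ x y • Sig x y + vpdy Φ x y)
        = cross (Φ x y) (rot Ψ x y + vpdy Φ x y) + divx Φ x y • Ψ x y := by
    intro x y
    funext i
    fin_cases i <;>
      simp [hΨ, cross, Pi.add_apply, Pi.smul_apply, smul_eq_mul] <;> ring
  constructor
  · rintro ⟨h1, h2⟩ x y
    have h := h2 x y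
    rw [hz, hgrad] at h
    rw [key]
    exact h
  · intro h
    constructor
    · intro x y
      have h2 := h x y
      rw [key] at h2
      rw [hz, hpdy]
      have h0 := congrFun h2 0
      have h1 := congrFun h2 1
      have h3 := congrFun h2 2
      simp only [hΨ, cross, dot, Pi.add_apply, Pi.smul_apply, Pi.zero_apply,
        smul_eq_mul, Matrix.cons_val_zero, Matrix.cons_val_one, Matrix.head_cons,
        Matrix.cons_val_two, Matrix.tail_cons] at h0 h1 h3 ⊢
      linear_combination (-(Sig x y 0)) * h0 + (-(Sig x y 1)) * h1 + (-(Sig x y 2)) * h3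
    · intro x y
      have h2 := h x y
      rw [key] at h2
      rw [hz, hgrad]
      exact h2
end
end

section
/- Let M be a symmetric 3×3 real matrix, α ∈ ℝ³, b ∈ ℝ, and set k₁(x,y) = ½ xᵀMx + (α·x)y + ½by². Let A ∈ ℝ³, c ∈ ℝ and define Ψ(x,y) = c(Mx + yα) + (α·x + by)A and Φ(x,y) = A × (Mx + yα). Then (Ψ,Φ) satisfies the Jacobi equations on ℝ⁴, and both k₁ and the linear function k₂(x,y) = A·x − cy are Casimir functions of (Ψ,Φ). -/
noncomputable section

open ContinuousLinearMap in
lemma hd_lin (w : V3) (r : ℝ) (x : V3) :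
    HasFDerivAt (fun x' : V3 => w 0 * x' 0 + w 1 * x' 1 + w 2 * x' 2 + r)
      (w 0 • proj 0 + w 1 • proj 1 + w 2 • proj 2 : V3 →L[ℝ] ℝ) x := by
  exact ((((hasFDerivAt_apply (0:Fin 3) x).const_mul (w 0)).add
    ((hasFDerivAt_apply (1:Fin 3) x).const_mul (w 1))).add
    ((hasFDerivAt_apply (2:Fin 3) x).const_mul (w 2))).add_const r

open ContinuousLinearMap in
lemma lin_eval (w : V3) (i : Fin 3) :
    (w 0 • proj 0 + w 1 • proj 1 + w 2 • proj 2 : V3 →L[ℝ] ℝ) (Pi.single i 1) = w i := by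
  fin_cases i <;> simp [Pi.single_apply]

lemma pdx_lin (i : Fin 3) (f : SF) (x : V3) (y : ℝ) (w : V3) (r : ℝ)
    (hf : ∀ x', f x' y = w 0 * x' 0 + w 1 * x' 1 + w 2 * x' 2 + r) :
    pdx i f x y = w i := by
  have : (fun x' => f x' y) = fun x' : V3 => w 0 * x' 0 + w 1 * x' 1 + w 2 * x' 2 + r :=
    funext hf
  rw [pdx, this, (hd_lin w r x).fderiv, lin_eval]

lemma pdy_poly (f : SF) (x : V3) (y a d e : ℝ)
    (hf : ∀ y', f x y' = a + d * y' + e * y' ^ 2) :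
    pdy f x y = d + e * (2 * y) := by
  have : (fun y' => f x y') = fun y' : ℝ => a + d * y' + e * y' ^ 2 := funext hf
  rw [pdy, this]
  have h : HasDerivAt (fun y' : ℝ => a + d * y' + e * y' ^ 2) (d + e * (2 * y)) y := by
    have h1 : HasDerivAt (fun y' : ℝ => d * y') (d * 1) y := (hasDerivAt_id y).const_mul d
    have h2 : HasDerivAt (fun y' : ℝ => e * y' ^ 2) (e * ((2:ℕ) * y ^ 1)) y :=
      (hasDerivAt_pow 2 y).const_mul e
    have := (h1.const_add a).fun_add h2
    apply this.congr_deriv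
    push_cast; ring
  exact h.deriv

lemma pdy_lin (f : SF) (x : V3) (y a d : ℝ)
    (hf : ∀ y', f x y' = a + d * y') : pdy f x y = d := by
  have := pdy_poly f x y a d 0 (by intro y'; rw [hf y']; ring)
  simpa using this

open ContinuousLinearMap in
lemma pdx_quad (i : Fin 3) (f : SF) (x : V3) (y : ℝ) (q : Fin 3 → Fin 3 → ℝ) (w : V3) (r : ℝ)
    (hf : ∀ x', f x' y =
      (∑ j : Fin 3, ∑ k : Fin 3, q j k * (x' j * x' k)) +
        (w 0 * x' 0 + w 1 * x' 1 + w 2 * x' 2) + r) :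
    pdx i f x y =
      (∑ j : Fin 3, ∑ k : Fin 3,
        q j k * (x j * (Pi.single i 1 : V3) k + x k * (Pi.single i 1 : V3) j)) + w i := by
  have hq : HasFDerivAt (fun x' : V3 => ∑ j : Fin 3, ∑ k : Fin 3, q j k * (x' j * x' k))
      (∑ j : Fin 3, ∑ k : Fin 3, q j k • (x j • proj k + x k • proj j) : V3 →L[ℝ] ℝ) x := by
    apply HasFDerivAt.fun_sum
    intro j _
    apply HasFDerivAt.fun_sum
    intro k _
    exact ((hasFDerivAt_apply j x).mul (hasFDerivAt_apply k x)).const_mul (q j k)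
  have hfe : (fun x' => f x' y) =
      fun x' : V3 => (∑ j : Fin 3, ∑ k : Fin 3, q j k * (x' j * x' k)) +
        (w 0 * x' 0 + w 1 * x' 1 + w 2 * x' 2 + r) := by
    funext x'; rw [hf x']; ring
  rw [pdx, hfe, (hq.fun_add (hd_lin w r x)).fderiv]
  simp only [ContinuousLinearMap.add_apply, ContinuousLinearMap.sum_apply,
    ContinuousLinearMap.smul_apply, ContinuousLinearMap.proj_apply, smul_eq_mul, lin_eval]
  congr 1
  fin_cases i <;> simp [Pi.single_apply]

set_option maxHeartbeats 2000000 in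
theorem stmt19 (M : Matrix (Fin 3) (Fin 3) ℝ) (hM : M.IsSymm)
    (α A : V3) (b c : ℝ) :
    JacobiEqs
      (fun x y => c • (M.mulVec x + y • α) + (dot α x + b * y) • A)
      (fun x y => cross A (M.mulVec x + y • α)) ∧
    Casimir
      (fun x y => c • (M.mulVec x + y • α) + (dot α x + b * y) • A)
      (fun x y => cross A (M.mulVec x + y • α))
      (fun x y => (1 / 2) * dot x (M.mulVec x) + dot α x * y + (1 / 2) * b * y ^ 2) ∧
    Casimir
      (fun x y => c • (M.mulVec x + y • α) + (dot α x + b * y) • A)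
      (fun x y => cross A (M.mulVec x + y • α))
      (fun x y => dot A x - c * y) := by
  have hs := hM.apply
  -- pdx of Ψ components
  have hΨ : ∀ (i j : Fin 3) (x : V3) (y : ℝ),
      pdx i (fun x y => (c • (M.mulVec x + y • α) + (dot α x + b * y) • A) j) x y
        = c * M j i + A j * α i := by
    intro i j x y
    apply pdx_lin i _ x y (fun i => c * M j i + A j * α i) (c * (y * α j) + b * y * A j)
    intro x'
    simp [Matrix.mulVec, dotProduct, Fin.sum_univ_three, dot]
    ring
  -- pdx of Φ components
  have hΦ : ∀ (i j : Fin 3) (x : V3) (y : ℝ),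
      pdx i (fun x y => cross A (M.mulVec x + y • α) j) x y
        = cross A (fun k => M k i) j := by
    intro i j x y
    apply pdx_lin i _ x y (fun i => cross A (fun k => M k i) j) (cross A (y • α) j)
    intro x'
    fin_cases j <;>
      simp [cross, Matrix.mulVec, dotProduct, Fin.sum_univ_three, dot] <;> ring
  -- pdy of Φ components
  have hvΦ : ∀ (j : Fin 3) (x : V3) (y : ℝ),
      pdy (fun x y => cross A (M.mulVec x + y • α) j) x y = cross A α j := by
    intro j x y
    apply pdy_lin _ x y (cross A (M.mulVec x) j) (cross A α j)
    intro y'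
    fin_cases j <;> simp [cross] <;> ring
  -- Ψ · Φ vanishes identically
  have hzero : ∀ (x : V3) (y : ℝ),
      dot (c • (M.mulVec x + y • α) + (dot α x + b * y) • A)
        (cross A (M.mulVec x + y • α)) = 0 := by
    intro x y
    simp [dot, cross]
    ring
  have h0y : ∀ (x : V3) (y : ℝ),
      pdy (fun x y => dot (c • (M.mulVec x + y • α) + (dot α x + b * y) • A)
        (cross A (M.mulVec x + y • α))) x y = 0 := by
    intro x y
    apply pdy_lin _ x y 0 0
    intro y'; rw [hzero]; ring
  have h0x : ∀ (i : Fin 3) (x : V3) (y : ℝ),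
      pdx i (fun x y => dot (c • (M.mulVec x + y • α) + (dot α x + b * y) • A)
        (cross A (M.mulVec x + y • α))) x y = 0 := by
    intro i x y
    apply pdx_lin i _ x y (fun _ => 0) 0
    intro x'; rw [hzero]; ring
  -- grad and pdy of k₁
  have hg1 : ∀ (i : Fin 3) (x : V3) (y : ℝ),
      pdx i (fun x y => (1 / 2) * dot x (M.mulVec x) + dot α x * y + (1 / 2) * b * y ^ 2) x y
        = M.mulVec x i + y * α i := by
    intro i x y
    have := pdx_quad i
      (fun x y => (1 / 2) * dot x (M.mulVec x) + dot α x * y + (1 / 2) * b * y ^ 2) x y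
      (fun j k => (1 / 2) * M j k) (fun i => α i * y)
      ((1 / 2) * b * y ^ 2) (by
        intro x'
        simp [dot, Matrix.mulVec, dotProduct, Fin.sum_univ_three]
        ring)
    rw [this]
    fin_cases i <;>
      simp [Fin.sum_univ_three, Pi.single_apply, Matrix.mulVec, dotProduct] <;>
      simp only [hs 0 1, hs 0 2, hs 1 2] <;> ring
  have hp1 : ∀ (x : V3) (y : ℝ),
      pdy (fun x y => (1 / 2) * dot x (M.mulVec x) + dot α x * y + (1 / 2) * b * y ^ 2) x y
        = dot α x + b * y := by
    intro x y
    have := pdy_poly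
      (fun x y => (1 / 2) * dot x (M.mulVec x) + dot α x * y + (1 / 2) * b * y ^ 2) x y
      ((1 / 2) * dot x (M.mulVec x)) (dot α x) ((1 / 2) * b)
      (by intro y'; ring)
    rw [this]; ring
  -- grad and pdy of k₂
  have hg2 : ∀ (i : Fin 3) (x : V3) (y : ℝ),
      pdx i (fun x y => dot A x - c * y) x y = A i := by
    intro i x y
    apply pdx_lin i _ x y A (-(c * y))
    intro x'; simp [dot]; ring
  have hp2 : ∀ (x : V3) (y : ℝ), pdy (fun x y => dot A x - c * y) x y = -c := by
    intro x y
    apply pdy_lin _ x y (dot A x) (-c)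
    intro y'; ring
  -- vector-level facts
  have hvpv : ∀ (x : V3) (y : ℝ),
      vpdy (fun x y => cross A (M.mulVec x + y • α)) x y = cross A α := by
    intro x y; funext j
    exact hvΦ j x y
  have hdiv : ∀ (x : V3) (y : ℝ),
      divx (fun x y => cross A (M.mulVec x + y • α)) x y = 0 := by
    intro x y
    rw [divx, Fin.sum_univ_three]
    simp only [hΦ]
    simp [cross]
    simp only [hs 0 1, hs 0 2, hs 1 2]
    ring
  have hrot : ∀ (x : V3) (y : ℝ),
      rot (fun x y => c • (M.mulVec x + y • α) + (dot α x + b * y) • A) x y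
        = cross α A := by
    intro x y
    rw [rot]
    simp only [hΨ]
    funext j
    fin_cases j <;> simp [cross] <;>
      simp only [hs 0 1, hs 0 2, hs 1 2] <;> ring
  have hgrad0 : ∀ (x : V3) (y : ℝ),
      grad (fun x y => dot (c • (M.mulVec x + y • α) + (dot α x + b * y) • A)
        (cross A (M.mulVec x + y • α))) x y = 0 := by
    intro x y; funext i
    show pdx i _ x y = _
    rw [h0x]
    simp
  have hgrad1 : ∀ (x : V3) (y : ℝ),
      grad (fun x y => (1 / 2) * dot x (M.mulVec x) + dot α x * y + (1 / 2) * b * y ^ 2) x y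
        = M.mulVec x + y • α := by
    intro x y; funext i
    show pdx i _ x y = _
    rw [hg1]
    simp [mul_comm]
  have hgrad2 : ∀ (x : V3) (y : ℝ),
      grad (fun x y => dot A x - c * y) x y = A := by
    intro x y; funext i
    exact hg2 i x y
  refine ⟨⟨fun x y => ?_, fun x y => ?_⟩, fun x y => ⟨?_, ?_⟩, fun x y => ⟨?_, ?_⟩⟩
  · -- Jacobi 1
    simp only [hrot, hvpv, h0y]
    simp [dot, cross]
    ring
  · -- Jacobi 2
    simp only [hrot, hvpv, hdiv, hgrad0]
    funext i
    fin_cases i <;> simp [dot, cross] <;> ring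
  · -- Casimir k1, vector part
    simp only [hgrad1, hp1]
    funext i
    fin_cases i <;>
      simp [cross, dot, Pi.add_apply, Pi.smul_apply, smul_eq_mul] <;> ring
  · -- Casimir k1, scalar part
    simp only [hgrad1]
    simp [dot, cross]
    ring
  · -- Casimir k2, vector part
    simp only [hgrad2, hp2]
    funext i
    fin_cases i <;> simp [cross, dot] <;> ring
  · -- Casimir k2, scalar part
    simp only [hgrad2]
    simp [dot, cross]
    ring
end
end
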